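/- If H ∈ F_2^{r×n} contains a subset of rows H_1 such that C(H_1) = C(H) and the Tanner graph T(H_1) is cycle-free, then the set of pseudocodewords of H equals the set of nonnegative-integer combinations of codewords of C(H). -/

import Mathlib

open Finset

/-- The Tanner graph of a binary matrix `H`: bit nodes are columns (`Sum.inl`),
check nodes are rows (`Sum.inr`), with an edge whenever the entry is 1. -/
def tanner {r n : ℕ} (H : Matrix (Fin r) (Fin n) (ZMod 2)) :
    SimpleGraph (Fin n ⊕ Fin r) where
  Adj v w :=
    (∃ i j, v = Sum.inl i ∧ w = Sum.inr j ∧ H j i = 1) ∨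
    (∃ i j, v = Sum.inr j ∧ w = Sum.inl i ∧ H j i = 1)
  symm := by
    constructor
    rintro v w (⟨i, j, h1, h2, h3⟩ | ⟨i, j, h1, h2, h3⟩)
    · exact Or.inr ⟨i, j, h2, h1, h3⟩
    · exact Or.inl ⟨i, j, h2, h1, h3⟩
  loopless := by
    constructor
    rintro v (⟨i, j, h1, h2, _⟩ | ⟨i, j, h1, h2, _⟩) <;> subst h1 <;> simp at h2

/-- Membership in the fundamental cone `K(H)` for integer vectors. -/
def inConeZ {r n : ℕ} (H : Matrix (Fin r) (Fin n) (ZMod 2)) (p : Fin n → ℤ) : Prop :=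
  (∀ i, 0 ≤ p i) ∧
  ∀ j i, (if H j i = 1 then p i else 0) ≤
    ∑ l ∈ Finset.univ.erase i, (if H j l = 1 then p l else 0)

/-- `H pᵀ ≡ 0 (mod 2)`. -/
def parityOK {r n : ℕ} (H : Matrix (Fin r) (Fin n) (ZMod 2)) (p : Fin n → ℤ) : Prop :=
  ∀ j, (∑ i, (if H j i = 1 then p i else 0)) % 2 = 0

/-- Graph-cover pseudocodeword, via the Koetter–Li–Vontobel–Walker characterization. -/
def isPseudo {r n : ℕ} (H : Matrix (Fin r) (Fin n) (ZMod 2)) (p : Fin n → ℤ) : Prop :=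
  inConeZ H p ∧ parityOK H p

/-- `p` is a finite nonnegative-integer combination of codewords of `C(H)`. -/
def isComb {r n : ℕ} (H : Matrix (Fin r) (Fin n) (ZMod 2)) (p : Fin n → ℤ) : Prop :=
  ∃ a : (Fin n → ZMod 2) → ℕ,
    ∀ i, p i =
      ∑ c : Fin n → ZMod 2,
        (if H.mulVec c = 0 then (a c : ℤ) * ((c i).val : ℤ) else 0)

/-- `H` is geometrically perfect. -/
def geomPerfect {r n : ℕ} (H : Matrix (Fin r) (Fin n) (ZMod 2)) : Prop :=
  ∀ p, isPseudo H p ↔ isComb H p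

/-
Let `M` have a cycle-free Tanner graph and let `p` be a nonzero pseudocodeword of `M`. Start
at a bit `i₀` with `p i₀ > 0` and explore the tree: at each check entered through a bit, select
the other bit of that check on which `p` is largest. The selected bits `B` meet every check in
zero or two bits, so they form a codeword, and `p - 𝟙_B` is again a pseudocodeword; the choice of
a maximum rules out the only bad case, an unselected bit carrying half of the check sum. Formally
the exploration is a recursion that deletes one check of `i₀`, which disconnects `i₀` from the
selected partner, and glues the two sets obtained in the resulting smaller forest. Induction on
`∑ p` then writes `p` as a sum of codewords.

For `H`, a pseudocodeword of `H` is one of the row subset `H₁`, hence a sum of codewords of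
`C(H₁) = C(H)`; conversely, sums of codewords are always pseudocodewords.
-/

section RowSupport

variable {r n : ℕ}

def rowSupp (M : Matrix (Fin r) (Fin n) (ZMod 2)) (j : Fin r) : Finset (Fin n) :=
  univ.filter fun i => M j i = 1

lemma mem_rowSupp {M : Matrix (Fin r) (Fin n) (ZMod 2)} {j : Fin r} {i : Fin n} :
    i ∈ rowSupp M j ↔ M j i = 1 := by
  simp [rowSupp]

lemma inConeZ_iff {M : Matrix (Fin r) (Fin n) (ZMod 2)} {p : Fin n → ℤ} :
    inConeZ M p ↔ (∀ i, 0 ≤ p i) ∧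
      ∀ j, ∀ i ∈ rowSupp M j, 2 * p i ≤ ∑ l ∈ rowSupp M j, p l := by
  refine and_congr_right fun hp => forall_congr' fun j => ?_
  have hsum : ∀ i, ∑ l ∈ univ.erase i, (if M j l = 1 then p l else 0) =
      ∑ l ∈ rowSupp M j, p l - if M j i = 1 then p i else 0 := fun i => by
    rw [sum_erase_eq_sub (mem_univ i), rowSupp, sum_filter]
  simp only [hsum, mem_rowSupp]
  refine forall_congr' fun i => ?_
  by_cases hi : M j i = 1
  · simp only [hi, if_true, true_imp_iff]
    omega
  · simp only [hi, if_false, false_imp_iff, sub_zero, iff_true]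
    exact sum_nonneg fun l _ => hp l

lemma parityOK_iff {M : Matrix (Fin r) (Fin n) (ZMod 2)} {p : Fin n → ℤ} :
    parityOK M p ↔ ∀ j, (∑ l ∈ rowSupp M j, p l) % 2 = 0 := by
  simp only [parityOK, rowSupp, sum_filter]

lemma mulVec_apply_eq_sum_rowSupp (M : Matrix (Fin r) (Fin n) (ZMod 2)) (c : Fin n → ZMod 2)
    (j : Fin r) : M.mulVec c j = ∑ i ∈ rowSupp M j, c i := by
  rw [Matrix.mulVec, dotProduct, rowSupp, sum_filter]
  refine sum_congr rfl fun i _ => ?_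
  obtain h | h : M j i = 0 ∨ M j i = 1 := by generalize M j i = x; decide +revert
  all_goals simp [h]

lemma mulVec_intCast_eq_zero_iff {M : Matrix (Fin r) (Fin n) (ZMod 2)} {q : Fin n → ℤ} :
    M.mulVec (fun i => (q i : ZMod 2)) = 0 ↔ parityOK M q := by
  simp only [parityOK_iff, funext_iff, mulVec_apply_eq_sum_rowSupp, Pi.zero_apply,
    ← Int.cast_sum, ZMod.intCast_zmod_eq_zero_iff_dvd, Int.dvd_iff_emod_eq_zero]
  rfl

end RowSupport

section Pseudocodewords

variable {r r' n : ℕ}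

lemma rowSupp_eq_empty_or_exists {M : Matrix (Fin r) (Fin n) (ZMod 2)}
    {M' : Matrix (Fin r') (Fin n) (ZMod 2)} (h : ∀ j', M' j' = 0 ∨ ∃ j, M' j' = M j) (j' : Fin r') :
    rowSupp M' j' = ∅ ∨ ∃ j, rowSupp M' j' = rowSupp M j := by
  rcases h j' with h0 | ⟨j, hj⟩
  · left; simp [rowSupp, h0]
  · right; exact ⟨j, by simp [rowSupp, hj]⟩

lemma inConeZ.of_rows {M : Matrix (Fin r) (Fin n) (ZMod 2)} {M' : Matrix (Fin r') (Fin n) (ZMod 2)}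
    (h : ∀ j', M' j' = 0 ∨ ∃ j, M' j' = M j) {p : Fin n → ℤ} (hp : inConeZ M p) :
    inConeZ M' p := by
  rw [inConeZ_iff] at hp ⊢
  refine ⟨hp.1, fun j' => ?_⟩
  rcases rowSupp_eq_empty_or_exists h j' with h0 | ⟨j, hj⟩
  · simp [h0]
  · rw [hj]; exact hp.2 j

lemma isPseudo.of_rows {M : Matrix (Fin r) (Fin n) (ZMod 2)}
    {M' : Matrix (Fin r') (Fin n) (ZMod 2)} (h : ∀ j', M' j' = 0 ∨ ∃ j, M' j' = M j)
    {p : Fin n → ℤ} (hp : isPseudo M p) : isPseudo M' p := by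
  refine ⟨hp.1.of_rows h, parityOK_iff.2 fun j' => ?_⟩
  rcases rowSupp_eq_empty_or_exists h j' with h0 | ⟨j, hj⟩
  · simp [h0]
  · rw [hj]; exact parityOK_iff.1 hp.2 j

variable {M : Matrix (Fin r) (Fin n) (ZMod 2)}

lemma isPseudo_zero : isPseudo M 0 := by
  simp [isPseudo, inConeZ_iff, parityOK_iff]

lemma isPseudo.add {p q : Fin n → ℤ} (hp : isPseudo M p) (hq : isPseudo M q) :
    isPseudo M (p + q) := by
  rw [isPseudo, inConeZ_iff, parityOK_iff] at *
  refine ⟨⟨fun i => add_nonneg (hp.1.1 i) (hq.1.1 i), fun j i hi => ?_⟩, fun j => ?_⟩ <;>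
    simp only [Pi.add_apply, sum_add_distrib]
  · linarith [hp.1.2 j i hi, hq.1.2 j i hi]
  · have := hp.2 j
    have := hq.2 j
    omega

def pseudoAddSubmonoid (M : Matrix (Fin r) (Fin n) (ZMod 2)) : AddSubmonoid (Fin n → ℤ) where
  carrier := {p | isPseudo M p}
  zero_mem' := isPseudo_zero
  add_mem' := isPseudo.add

lemma isPseudo_of_parityOK {q : Fin n → ℤ} (hq01 : ∀ i, q i = 0 ∨ q i = 1)
    (hq : parityOK M q) : isPseudo M q := by
  refine ⟨inConeZ_iff.2 ⟨fun i => by rcases hq01 i with h | h <;> omega, fun j i hi => ?_⟩, hq⟩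
  have hle : q i ≤ ∑ l ∈ rowSupp M j, q l :=
    single_le_sum (fun l _ => by rcases hq01 l with h | h <;> omega) hi
  have heven := parityOK_iff.1 hq j
  rcases hq01 i with h | h <;> omega

lemma isComb_of_parityOK {q : Fin n → ℤ} (hq01 : ∀ i, q i = 0 ∨ q i = 1)
    (hq : parityOK M q) : isComb M q := by
  set c : Fin n → ZMod 2 := fun i => (q i : ZMod 2)
  have hc : M.mulVec c = 0 := mulVec_intCast_eq_zero_iff.2 hq
  refine ⟨fun x => if x = c then 1 else 0, fun i => ?_⟩
  rw [sum_eq_single c (fun x _ hx => by simp [hx]) (by simp), if_pos hc]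
  rcases hq01 i with h | h <;> simp [c, h, ZMod.val_one_eq_one_mod]

lemma isPseudo_of_isComb {p : Fin n → ℤ} (hp : isComb M p) : isPseudo M p := by
  obtain ⟨a, ha⟩ := hp
  have hsum : p = ∑ c : Fin n → ZMod 2,
      if M.mulVec c = 0 then a c • fun i => ((c i).val : ℤ) else 0 := by
    ext i
    simp only [ha i, Finset.sum_apply]
    refine sum_congr rfl fun c _ => ?_
    split_ifs <;> simp
  change _ ∈ pseudoAddSubmonoid M
  rw [hsum]
  refine sum_mem fun c _ => ?_
  split_ifs with hc
  · have hcast : (fun i => (((c i).val : ℤ) : ZMod 2)) = c := by ext i; simp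
    refine nsmul_mem (isPseudo_of_parityOK (fun i => ?_) ?_) _
    · have := ZMod.val_lt (c i)
      omega
    · exact mulVec_intCast_eq_zero_iff.1 (by rwa [hcast])
  · exact zero_mem _

end Pseudocodewords

section SplitsOff

variable {r n : ℕ}

def indicatorZ (B : Finset (Fin n)) (i : Fin n) : ℤ := if i ∈ B then 1 else 0

lemma sum_indicatorZ (N B : Finset (Fin n)) : ∑ l ∈ N, indicatorZ B l = #(N ∩ B) := by
  simp [indicatorZ]

def SplitsOff (M : Matrix (Fin r) (Fin n) (ZMod 2)) (p : Fin n → ℤ) (B : Finset (Fin n)) :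
    Prop :=
  (∀ i ∈ B, 1 ≤ p i) ∧ ∀ j, rowSupp M j ∩ B = ∅ ∨
    ∃ a b, a ≠ b ∧ rowSupp M j ∩ B = {a, b} ∧ ∀ m ∈ rowSupp M j, p m ≤ p a ∨ p m ≤ p b

variable {M : Matrix (Fin r) (Fin n) (ZMod 2)} {p : Fin n → ℤ} {B : Finset (Fin n)}

lemma SplitsOff.parityOK_indicatorZ (h : SplitsOff M p B) : parityOK M (indicatorZ B) := by
  refine parityOK_iff.2 fun j => ?_
  rw [sum_indicatorZ]
  rcases h.2 j with h0 | ⟨a, b, hab, hN, -⟩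
  · simp [h0]
  · simp [hN, hab]

lemma SplitsOff.isPseudo_sub (h : SplitsOff M p B) (hp : isPseudo M p) :
    isPseudo M (p - indicatorZ B) := by
  obtain ⟨hpos, hrow⟩ := h
  obtain ⟨hnn, hcone⟩ := inConeZ_iff.1 hp.1
  have hsum : ∀ j, ∑ l ∈ rowSupp M j, (p - indicatorZ B) l =
      ∑ l ∈ rowSupp M j, p l - #(rowSupp M j ∩ B) := fun j => by
    simp only [Pi.sub_apply, sum_sub_distrib, sum_indicatorZ]
  refine ⟨inConeZ_iff.2 ⟨fun i => ?_, fun j m hm => ?_⟩, parityOK_iff.2 fun j => ?_⟩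
  · by_cases hi : i ∈ B
    · simpa [indicatorZ, hi] using hpos i hi
    · simpa [indicatorZ, hi] using hnn i
  · rw [hsum]
    have hm' := hcone j m hm
    rcases hrow j with h0 | ⟨a, b, hab, hN, hmax⟩
    · have : m ∉ B := fun hmB => by simpa [h0] using mem_inter.2 ⟨hm, hmB⟩
      simp [h0, indicatorZ, this, hm']
    · have hmem : ∀ x, x ∈ rowSupp M j ∧ x ∈ B ↔ x = a ∨ x = b := fun x => by
        rw [← mem_inter, hN, mem_insert, mem_singleton]
      have ha := (hmem a).2 (Or.inl rfl)
      have hb := (hmem b).2 (Or.inr rfl)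
      rw [hN, card_pair hab]
      by_cases hmB : m ∈ B
      · simp only [Pi.sub_apply, indicatorZ, hmB, if_true]
        push_cast
        linarith
      · -- the row sum is even and at least `p m + p a + p b > 2 p m`
        have hma : m ≠ a := fun e => hmB (e ▸ ha.2)
        have hmb : m ≠ b := fun e => hmB (e ▸ hb.2)
        have h3 : p m + p a + p b ≤ ∑ l ∈ rowSupp M j, p l := by
          have hsub : {m, a, b} ⊆ rowSupp M j := by
            simp [insert_subset_iff, hm, ha.1, hb.1]
          have := sum_le_sum_of_subset_of_nonneg hsub fun l _ _ => hnn l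
          rwa [sum_insert (by simp [hma, hmb]), sum_pair hab, ← add_assoc] at this
        have heven := parityOK_iff.1 hp.2 j
        have hpa := hpos a ha.2
        have hpb := hpos b hb.2
        simp only [Pi.sub_apply, indicatorZ, hmB, if_false, sub_zero]
        push_cast
        rcases hmax m hm with h | h <;> omega
  · rw [hsum]
    have := parityOK_iff.1 hp.2 j
    rcases hrow j with h0 | ⟨a, b, hab, hN, -⟩
    · simpa [h0] using this
    · rw [hN, card_pair hab]
      push_cast
      omega

lemma inConeZ.exists_max_partner (hp : inConeZ M p) {j : Fin r} {i : Fin n} (hi : M j i = 1)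
    (hpi : 1 ≤ p i) :
    ∃ l ∈ (rowSupp M j).erase i, 1 ≤ p l ∧ ∀ m ∈ rowSupp M j, p m ≤ p i ∨ p m ≤ p l := by
  obtain ⟨hnn, hcone⟩ := inConeZ_iff.1 hp
  have hi' := mem_rowSupp.2 hi
  have hpos : 0 < ∑ m ∈ (rowSupp M j).erase i, p m := by
    have := hcone j i hi'
    rw [← add_sum_erase _ _ hi'] at this
    omega
  obtain ⟨l, hl, hmax⟩ := exists_max_image _ p (nonempty_of_sum_ne_zero hpos.ne')
  refine ⟨l, hl, ?_, fun m hm => ?_⟩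
  · by_contra! hl0
    have := sum_nonpos fun m hm => (hmax m hm).trans (by omega)
    omega
  · rcases eq_or_ne m i with rfl | hmi
    · exact Or.inl le_rfl
    · exact Or.inr (hmax m (mem_erase.2 ⟨hmi, hm⟩))

end SplitsOff

section Forest

open SimpleGraph

variable {r n : ℕ}

@[simp]
lemma tanner_adj_inl_inr {M : Matrix (Fin r) (Fin n) (ZMod 2)} {i : Fin n} {j : Fin r} :
    (tanner M).Adj (.inl i) (.inr j) ↔ M j i = 1 := by
  simp [tanner]

lemma tanner_reachable_of_mem_rowSupp {M : Matrix (Fin r) (Fin n) (ZMod 2)} {j : Fin r}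
    {a b : Fin n} (ha : a ∈ rowSupp M j) (hb : b ∈ rowSupp M j) :
    (tanner M).Reachable (.inl a) (.inl b) := by
  rw [mem_rowSupp] at ha hb
  exact (tanner_adj_inl_inr.2 ha).reachable.trans (tanner_adj_inl_inr.2 hb).symm.reachable

lemma rowSupp_updateRow_zero_subset (M : Matrix (Fin r) (Fin n) (ZMod 2)) (j j' : Fin r) :
    rowSupp (M.updateRow j 0) j' ⊆ rowSupp M j' := by
  rcases eq_or_ne j' j with rfl | hj'
  · simp [rowSupp]
  · simp [rowSupp, Matrix.updateRow_ne hj']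

lemma tanner_updateRow_zero_le (M : Matrix (Fin r) (Fin n) (ZMod 2)) (j : Fin r) :
    tanner (M.updateRow j 0) ≤ tanner M := by
  have h : ∀ j' i, M.updateRow j 0 j' i = 1 → M j' i = 1 := fun j' i hi =>
    mem_rowSupp.1 (rowSupp_updateRow_zero_subset M j j' (mem_rowSupp.2 hi))
  rintro v w (⟨i, j', rfl, rfl, hij⟩ | ⟨i, j', rfl, rfl, hij⟩)
  · exact Or.inl ⟨i, j', rfl, rfl, h j' i hij⟩
  · exact Or.inr ⟨i, j', rfl, rfl, h j' i hij⟩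

lemma not_reachable_tanner_updateRow_zero {M : Matrix (Fin r) (Fin n) (ZMod 2)}
    (hM : (tanner M).IsAcyclic) {j : Fin r} {a b : Fin n} (ha : M j a = 1) (hb : M j b = 1)
    (hab : a ≠ b) : ¬ (tanner (M.updateRow j 0)).Reachable (.inl a) (.inl b) := by
  intro hreach
  have hbridge := isBridge_iff.1 (isAcyclic_iff_forall_adj_isBridge.1 hM (tanner_adj_inl_inr.2 ha))
  refine hbridge (Reachable.trans (hreach.mono fun v w hvw => ?_) (Adj.reachable ?_))
  · refine deleteEdges_adj.2 ⟨tanner_updateRow_zero_le M j hvw, ?_⟩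
    intro he
    rcases Sym2.eq_iff.1 (Set.mem_singleton_iff.1 he) with ⟨rfl, rfl⟩ | ⟨rfl, rfl⟩
    · simp at hvw
    · simpa using hvw.symm
  · exact deleteEdges_adj.2 ⟨tanner_adj_inl_inr.2 hb, by simp [hab.symm]⟩

lemma sum_card_rowSupp_updateRow_zero_lt {M : Matrix (Fin r) (Fin n) (ZMod 2)} {j : Fin r}
    {i : Fin n} (hji : M j i = 1) :
    ∑ j', #(rowSupp (M.updateRow j 0) j') < ∑ j', #(rowSupp M j') := by
  refine sum_lt_sum (fun j' _ => card_le_card (rowSupp_updateRow_zero_subset M j j'))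
    ⟨j, mem_univ j, card_lt_card ?_⟩
  rw [show rowSupp (M.updateRow j 0) j = ∅ by simp [rowSupp], empty_ssubset]
  exact ⟨i, mem_rowSupp.2 hji⟩

lemma rowSupp_inter_eq_singleton_of_reachable {M : Matrix (Fin r) (Fin n) (ZMod 2)}
    (hM : (tanner M).IsAcyclic) {j : Fin r} {a : Fin n} (ha : M j a = 1) {B : Finset (Fin n)}
    (haB : a ∈ B) (hB : ∀ i ∈ B, (tanner (M.updateRow j 0)).Reachable (.inl a) (.inl i)) :
    rowSupp M j ∩ B = {a} := by
  ext x
  simp only [mem_inter, mem_rowSupp, mem_singleton]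
  refine ⟨fun ⟨hx, hxB⟩ => ?_, fun hx => hx ▸ ⟨ha, haB⟩⟩
  by_contra hxa
  exact not_reachable_tanner_updateRow_zero hM ha hx (Ne.symm hxa) (hB x hxB)

lemma SplitsOff.union_of_updateRow_zero {M : Matrix (Fin r) (Fin n) (ZMod 2)}
    (hM : (tanner M).IsAcyclic) {p : Fin n → ℤ} {j : Fin r} {a b : Fin n}
    (ha : M j a = 1) (hb : M j b = 1) (hab : a ≠ b)
    (hmax : ∀ m ∈ rowSupp M j, p m ≤ p a ∨ p m ≤ p b) {B₁ B₂ : Finset (Fin n)}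
    (h₁ : SplitsOff (M.updateRow j 0) p B₁) (haB₁ : a ∈ B₁)
    (hB₁ : ∀ i ∈ B₁, (tanner (M.updateRow j 0)).Reachable (.inl a) (.inl i))
    (h₂ : SplitsOff (M.updateRow j 0) p B₂) (hbB₂ : b ∈ B₂)
    (hB₂ : ∀ i ∈ B₂, (tanner (M.updateRow j 0)).Reachable (.inl b) (.inl i)) :
    SplitsOff M p (B₁ ∪ B₂) := by
  refine ⟨fun i hi => (mem_union.1 hi).elim (h₁.1 i) (h₂.1 i), fun j' => ?_⟩
  rw [inter_union_distrib_left]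
  rcases eq_or_ne j' j with rfl | hj'
  · rw [rowSupp_inter_eq_singleton_of_reachable hM ha haB₁ hB₁,
      rowSupp_inter_eq_singleton_of_reachable hM hb hbB₂ hB₂]
    exact Or.inr ⟨a, b, hab, rfl, hmax⟩
  have hrow : rowSupp (M.updateRow j 0) j' = rowSupp M j' := by
    simp [rowSupp, Matrix.updateRow_ne hj']
  have h₁' := h₁.2 j'
  have h₂' := h₂.2 j'
  rw [hrow] at h₁' h₂'
  -- a check other than `j` cannot see both halves: `a` and `b` are disconnected once `j` is gone
  have hdisj : rowSupp M j' ∩ B₁ = ∅ ∨ rowSupp M j' ∩ B₂ = ∅ := by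
    by_contra! hne
    obtain ⟨x, hx⟩ := hne.1
    obtain ⟨y, hy⟩ := hne.2
    rw [mem_inter, ← hrow] at hx hy
    exact not_reachable_tanner_updateRow_zero hM ha hb hab <|
      ((hB₁ x hx.2).trans (tanner_reachable_of_mem_rowSupp hx.1 hy.1)).trans (hB₂ y hy.2).symm
  rcases hdisj with h | h <;> rw [h] <;> simpa

theorem exists_splitsOff_of_isAcyclic (M : Matrix (Fin r) (Fin n) (ZMod 2))
    (hM : (tanner M).IsAcyclic) {p : Fin n → ℤ} (hp : inConeZ M p) (i₀ : Fin n)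
    (hi₀ : 1 ≤ p i₀) :
    ∃ B, i₀ ∈ B ∧ SplitsOff M p B ∧ ∀ i ∈ B, (tanner M).Reachable (.inl i₀) (.inl i) := by
  by_cases hcheck : ∀ j, M j i₀ ≠ 1
  · refine ⟨{i₀}, mem_singleton_self _, ⟨by simpa using hi₀, fun j => Or.inl ?_⟩, by simp⟩
    simp [rowSupp, hcheck j]
  obtain ⟨j, hj⟩ := not_forall_not.1 hcheck
  obtain ⟨l, hl, hpl, hmax⟩ := hp.exists_max_partner hj hi₀
  obtain ⟨hli₀, hl⟩ := mem_erase.1 hl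
  have hle := tanner_updateRow_zero_le M j
  have hrows : ∀ j', M.updateRow j 0 j' = 0 ∨ ∃ j'', M.updateRow j 0 j' = M j'' := fun j' => by
    rcases eq_or_ne j' j with rfl | hj'
    · simp
    · exact Or.inr ⟨j', Matrix.updateRow_ne hj'⟩
  have hM' := hM.anti hle
  have hp' := hp.of_rows hrows
  obtain ⟨B₁, hi₀B₁, hB₁, hreach₁⟩ := exists_splitsOff_of_isAcyclic _ hM' hp' i₀ hi₀
  obtain ⟨B₂, hlB₂, hB₂, hreach₂⟩ := exists_splitsOff_of_isAcyclic _ hM' hp' l hpl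
  refine ⟨B₁ ∪ B₂, mem_union_left _ hi₀B₁, hB₁.union_of_updateRow_zero hM hj
    (mem_rowSupp.1 hl) hli₀.symm hmax hi₀B₁ hreach₁ hB₂ hlB₂ hreach₂, fun i hi => ?_⟩
  rcases mem_union.1 hi with hi | hi
  · exact (hreach₁ i hi).mono hle
  · exact (tanner_reachable_of_mem_rowSupp (mem_rowSupp.2 hj) hl).trans ((hreach₂ i hi).mono hle)
termination_by ∑ j, #(rowSupp M j)
decreasing_by all_goals exact sum_card_rowSupp_updateRow_zero_lt hj

end Forest

section Perfect

variable {r n : ℕ} {M : Matrix (Fin r) (Fin n) (ZMod 2)}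

lemma isComb_zero : isComb M 0 := ⟨0, fun i => by simp⟩

lemma isComb.add {p q : Fin n → ℤ} (hp : isComb M p) (hq : isComb M q) : isComb M (p + q) := by
  obtain ⟨a, ha⟩ := hp
  obtain ⟨b, hb⟩ := hq
  refine ⟨a + b, fun i => ?_⟩
  rw [Pi.add_apply, ha i, hb i, ← sum_add_distrib]
  refine sum_congr rfl fun c _ => ?_
  split_ifs
  · push_cast [Pi.add_apply]
    ring
  · simp

lemma isComb_of_isPseudo_of_isAcyclic (hM : (tanner M).IsAcyclic) {p : Fin n → ℤ}
    (hp : isPseudo M p) : isComb M p := by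
  by_cases hzero : p = 0
  · exact hzero ▸ isComb_zero
  obtain ⟨i₀, hi₀⟩ := Function.ne_iff.1 hzero
  have hpos : 1 ≤ p i₀ := by
    have := hp.1.1 i₀
    simp only [Pi.zero_apply] at hi₀
    omega
  obtain ⟨B, hi₀B, hB, -⟩ := exists_splitsOff_of_isAcyclic M hM hp.1 i₀ hpos
  have hrest := hB.isPseudo_sub hp
  have hB01 : ∀ i, indicatorZ B i = 0 ∨ indicatorZ B i = 1 := fun i => by
    by_cases hi : i ∈ B <;> simp [indicatorZ, hi]
  simpa using (isComb_of_isPseudo_of_isAcyclic hM hrest).add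
    (isComb_of_parityOK hB01 hB.parityOK_indicatorZ)
termination_by (∑ i, p i).toNat
decreasing_by
  have hsum : ∑ i, (p - indicatorZ B) i = ∑ i, p i - #B := by
    simp [sum_sub_distrib, sum_indicatorZ]
  have hnn := sum_nonneg fun i (_ : i ∈ univ) => hrest.1.1 i
  have hcard : 0 < #B := card_pos.2 ⟨i₀, hi₀B⟩
  omega

theorem geomPerfect_of_isAcyclic (hM : (tanner M).IsAcyclic) : geomPerfect M :=
  fun _ => ⟨isComb_of_isPseudo_of_isAcyclic hM, isPseudo_of_isComb⟩

end Perfect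

theorem pseudo_eq_comb_of_acyclic_subrows_general {r r₁ n : ℕ}
    (H : Matrix (Fin r) (Fin n) (ZMod 2)) (f : Fin r₁ → Fin r)
    (hcode : ∀ y : Fin n → ZMod 2, (H.submatrix f id).mulVec y = 0 ↔ H.mulVec y = 0)
    (hforest : (tanner (H.submatrix f id)).IsAcyclic) :
    {p : Fin n → ℤ | isPseudo H p} = {p : Fin n → ℤ | isComb H p} := by
  ext p
  refine ⟨fun hp => ?_, isPseudo_of_isComb⟩
  have hp₁ : isPseudo (H.submatrix f id) p := hp.of_rows fun j => Or.inr ⟨f j, rfl⟩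
  obtain ⟨a, ha⟩ := (geomPerfect_of_isAcyclic hforest p).1 hp₁
  exact ⟨a, fun i => by simp only [ha i, hcode]⟩

/-- if `H` contains a subset of rows `H₁ = H.submatrix f id` with
`C(H₁) = C(H)` and `T(H₁)` cycle-free, then the pseudocodewords of `H` are exactly the
nonnegative-integer combinations of codewords of `C(H)`. -/
theorem pseudo_eq_comb_of_acyclic_subrows {r r₁ n : ℕ}
    (H : Matrix (Fin r) (Fin n) (ZMod 2)) (f : Fin r₁ → Fin r)
    (hf : Function.Injective f)
    (hcode : ∀ y : Fin n → ZMod 2, (H.submatrix f id).mulVec y = 0 ↔ H.mulVec y = 0)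
    (hforest : (tanner (H.submatrix f id)).IsAcyclic) :
    {p : Fin n → ℤ | isPseudo H p} = {p : Fin n → ℤ | isComb H p} :=
  pseudo_eq_comb_of_acyclic_subrows_general H f hcode hforest
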